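/- Let M and X be nonempty finite sets and p a probability mass function on M. Let a : ℝ × X × M → ℝ and q : ℝ × M × X → ℝ be such that for every (x,m), a(ψ,x,m) > 0 and ψ ↦ a(ψ,x,m) is differentiable, and for every (m,x), q(ψ,m,x) > 0, ψ ↦ q(ψ,m,x) is differentiable, and ∑_{m'} q(ψ,m',x) = 1. Define Z(ψ,m) = ∑_x a(ψ,x,m), p_ψ(x|m) = a(ψ,x,m)/Z(ψ,m), and κ(ψ,x,m) = ∂_ψ log a(ψ,x,m). Then the map ψ ↦ ∑_m p(m) ∑_x p_ψ(x|m)·log q(ψ,m,x) is differentiable with derivative ∑_m p(m) ∑_x p_ψ(x|m) · [ log q(ψ,m,x)·( κ(ψ,x,m) − ∑_{x'} p_ψ(x'|m)·κ(ψ,x',m) ) + ∂_ψ log q(ψ,m,x) ]. -/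

import Mathlib

open Real Finset

/-- ψ-gradient claim of Proposition 1: with `p_ψ(x|m) = a ψ x m / Z ψ m`,
`κ ψ x m = ∂_ψ log a(ψ,x,m)`, and a positive normalised inference model `q`,
`d/dψ E_{m∼p, x∼p_ψ(·|m)}[log q(ψ,m,x)] = E_{m∼p, x∼p_ψ(·|m)}[
  log q(ψ,m,x) * (κ − E_{x'∼p_ψ(·|m)}[κ]) + ∂_ψ log q(ψ,m,x)]`. -/
theorem stmt_11 {M X : Type*} [Fintype M] [Fintype X] [Nonempty M] [Nonempty X]
    (p : M → ℝ) (hpnn : ∀ m, 0 ≤ p m) (hpsum : ∑ m, p m = 1)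
    (a : ℝ → X → M → ℝ) (hapos : ∀ ψ x m, 0 < a ψ x m)
    (hadiff : ∀ x m, Differentiable ℝ fun ψ => a ψ x m)
    (q : ℝ → M → X → ℝ) (hqpos : ∀ ψ m x, 0 < q ψ m x)
    (hqdiff : ∀ m x, Differentiable ℝ fun ψ => q ψ m x)
    (hqsum : ∀ ψ x, ∑ m, q ψ m x = 1) :
    let Z : ℝ → M → ℝ := fun ψ m => ∑ x, a ψ x m
    let pψ : ℝ → X → M → ℝ := fun ψ x m => a ψ x m / Z ψ m
    let κ : ℝ → X → M → ℝ := fun ψ x m => deriv (fun ψ' => log (a ψ' x m)) ψ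
    ∀ ψ : ℝ,
      HasDerivAt (fun ψ' => ∑ m, p m * ∑ x, pψ ψ' x m * log (q ψ' m x))
        (∑ m, p m * ∑ x, pψ ψ x m *
          (log (q ψ m x) * (κ ψ x m - ∑ x', pψ ψ x' m * κ ψ x' m) +
            deriv (fun ψ' => log (q ψ' m x)) ψ)) ψ := by

  intro Z pψ κ ψ
  have hZpos : ∀ ψ' m, 0 < Z ψ' m := fun ψ' m =>
    Finset.sum_pos (fun x _ => hapos ψ' x m) Finset.univ_nonempty
  have key : ∀ m, HasDerivAt (fun ψ' => ∑ x, pψ ψ' x m * log (q ψ' m x))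
      (∑ x, pψ ψ x m *
        (log (q ψ m x) * (κ ψ x m - ∑ x', pψ ψ x' m * κ ψ x' m) +
          deriv (fun ψ' => log (q ψ' m x)) ψ)) ψ := by
    intro m
    have hκ : ∀ x, κ ψ x m = deriv (fun ψ' => a ψ' x m) ψ / a ψ x m := fun x =>
      (((hadiff x m ψ).hasDerivAt.log (hapos ψ x m).ne')).deriv
    have hZd : HasDerivAt (fun ψ' => Z ψ' m) (∑ x, deriv (fun ψ' => a ψ' x m) ψ) ψ :=
      HasDerivAt.fun_sum (fun x _ => (hadiff x m ψ).hasDerivAt)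
    have hsumκ : ∑ x', pψ ψ x' m * κ ψ x' m
        = (∑ x, deriv (fun ψ' => a ψ' x m) ψ) / Z ψ m := by
      rw [Finset.sum_div]
      refine Finset.sum_congr rfl fun x _ => ?_
      rw [hκ x]
      have ha := (hapos ψ x m).ne'
      have hZ := (hZpos ψ m).ne'
      simp only [pψ]
      field_simp [pψ]
    apply HasDerivAt.fun_sum
    intro x _
    have hpd : HasDerivAt (fun ψ' => pψ ψ' x m)
        ((deriv (fun ψ' => a ψ' x m) ψ * Z ψ m -
          a ψ x m * ∑ x, deriv (fun ψ' => a ψ' x m) ψ) / (Z ψ m) ^ 2) ψ :=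
      (hadiff x m ψ).hasDerivAt.div hZd (hZpos ψ m).ne'
    have hqd : HasDerivAt (fun ψ' => log (q ψ' m x))
        (deriv (fun ψ' => q ψ' m x) ψ / q ψ m x) ψ :=
      (hqdiff m x ψ).hasDerivAt.log (hqpos ψ m x).ne'
    have h := hpd.fun_mul hqd
    convert h using 1
    rfl
    rw [hqd.deriv, hκ x, hsumκ]
    have ha := (hapos ψ x m).ne'
    have hZ := (hZpos ψ m).ne'
    have hq := (hqpos ψ m x).ne'
    simp only [pψ]
    field_simp
  exact HasDerivAt.fun_sum (u := Finset.univ) fun m _ => (key m).const_mul (p m)
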